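/- Let (f, g): q → q' be a morphism of differential bundles in a tangent category. If (f, g) is linear, then μT(f) = ⟨π₀f, π₁f⟩μ' (where μ and μ' are the canonical maps E₂ → TE and E'₂ → TE' of the two bundles). Conversely, if μT(f) = ⟨π₀f, π₁f⟩μ' and (f, g) preserves the zero (ζf = gζ'), then (f, g) is linear. -/
import Mathlib


open CategoryTheory CategoryTheory.Limits

universe v u

variable {C : Type u} [Category.{v} C]

/-- Iterated power of an endofunctor. -/
def fpow (T : C ⥤ C) : ℕ → C ⥤ C
  | 0 => 𝟭 C
  | n + 1 => fpow T n ⋙ T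

/-- Tangent structure on a category (Cockett–Cruttwell). -/
structure TangentStructure (C : Type u) [Category.{v} C] where
  T : C ⥤ C
  p : T ⟶ 𝟭 C
  T2 : C ⥤ C
  π0 : T2 ⟶ T
  π1 : T2 ⟶ T
  /-- the chosen object `T2 M` is the pullback of `p` along itself -/
  isPB0 : ∀ M : C, IsPullback (π0.app M) (π1.app M) (p.app M) (p.app M)
  /-- this pullback is preserved by `T` -/
  isPB1 : ∀ M : C, IsPullback (T.map (π0.app M)) (T.map (π1.app M))
      (T.map (p.app M)) (T.map (p.app M))
  /-- and indeed by every power `Tⁿ` -/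
  isPBk : ∀ (k : ℕ) (M : C),
    IsPullback ((fpow T k).map (π0.app M)) ((fpow T k).map (π1.app M))
      ((fpow T k).map (p.app M)) ((fpow T k).map (p.app M))
  /-- all finite wide pullback powers of `p` exist -/
  hasWide : ∀ (n : ℕ) (M : C),
    HasLimit (WidePullbackShape.wideCospan M (fun _ : Fin n => T.obj M) (fun _ => p.app M))
  /-- and are preserved by every power `Tⁿ` -/
  presWide : ∀ (n k : ℕ) (M : C),
    PreservesLimit (WidePullbackShape.wideCospan M (fun _ : Fin n => T.obj M) (fun _ => p.app M))
      (fpow T k)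
  add : T2 ⟶ T
  zero : 𝟭 C ⟶ T
  add_p : ∀ M : C, add.app M ≫ p.app M = π0.app M ≫ p.app M
  zero_p : ∀ M : C, zero.app M ≫ p.app M = 𝟙 M
  add_comm : ∀ {X M : C} (f g : X ⟶ T.obj M) (h : f ≫ p.app M = g ≫ p.app M),
    (isPB0 M).lift f g h ≫ add.app M = (isPB0 M).lift g f h.symm ≫ add.app M
  add_zero : ∀ {X M : C} (f : X ⟶ T.obj M)
    (h : (f ≫ p.app M ≫ zero.app M) ≫ p.app M = f ≫ p.app M),
    (isPB0 M).lift (f ≫ p.app M ≫ zero.app M) f h ≫ add.app M = f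
  add_assoc : ∀ {X M : C} (f g h : X ⟶ T.obj M)
    (hfg : f ≫ p.app M = g ≫ p.app M) (hgh : g ≫ p.app M = h ≫ p.app M)
    (h1 : ((isPB0 M).lift f g hfg ≫ add.app M) ≫ p.app M = h ≫ p.app M)
    (h2 : f ≫ p.app M = ((isPB0 M).lift g h hgh ≫ add.app M) ≫ p.app M),
    (isPB0 M).lift ((isPB0 M).lift f g hfg ≫ add.app M) h h1 ≫ add.app M =
      (isPB0 M).lift f ((isPB0 M).lift g h hgh ≫ add.app M) h2 ≫ add.app M
  l : T ⟶ T ⋙ T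
  l_Tp : ∀ M : C, l.app M ≫ T.map (p.app M) = p.app M ≫ zero.app M
  l_zero : ∀ M : C, zero.app M ≫ l.app M = zero.app M ≫ T.map (zero.app M)
  l_add : ∀ {X M : C} (f g : X ⟶ T.obj M) (h : f ≫ p.app M = g ≫ p.app M)
    (h' : (f ≫ l.app M) ≫ T.map (p.app M) = (g ≫ l.app M) ≫ T.map (p.app M)),
    (isPB0 M).lift f g h ≫ add.app M ≫ l.app M =
      (isPB1 M).lift (f ≫ l.app M) (g ≫ l.app M) h' ≫ T.map (add.app M)
  c : T ⋙ T ⟶ T ⋙ T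
  c_p : ∀ M : C, c.app M ≫ p.app (T.obj M) = T.map (p.app M)
  c_zero : ∀ M : C, T.map (zero.app M) ≫ c.app M = zero.app (T.obj M)
  c_add : ∀ {X M : C} (f g : X ⟶ T.obj (T.obj M))
    (h : f ≫ T.map (p.app M) = g ≫ T.map (p.app M))
    (h' : (f ≫ c.app M) ≫ p.app (T.obj M) = (g ≫ c.app M) ≫ p.app (T.obj M)),
    (isPB1 M).lift f g h ≫ T.map (add.app M) ≫ c.app M =
      (isPB0 (T.obj M)).lift (f ≫ c.app M) (g ≫ c.app M) h' ≫ add.app (T.obj M)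
  c_c : ∀ M : C, c.app M ≫ c.app M = 𝟙 _
  l_c : ∀ M : C, l.app M ≫ c.app M = l.app M
  l_l : ∀ M : C, l.app M ≫ T.map (l.app M) = l.app M ≫ l.app (T.obj M)
  c_coh : ∀ M : C, T.map (c.app M) ≫ c.app (T.obj M) ≫ T.map (c.app M) =
      c.app (T.obj M) ≫ T.map (c.app M) ≫ c.app (T.obj M)
  c_l : ∀ M : C, c.app M ≫ T.map (l.app M) =
      l.app (T.obj M) ≫ T.map (c.app M) ≫ c.app (T.obj M)
  univ : ∀ (k : ℕ) (M : C)
    (h : (π0.app M ≫ l.app M) ≫ T.map (p.app M) =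
         (π1.app M ≫ zero.app (T.obj M)) ≫ T.map (p.app M)),
    IsPullback
      ((fpow T k).map ((isPB1 M).lift (π0.app M ≫ l.app M) (π1.app M ≫ zero.app (T.obj M)) h ≫
        T.map (add.app M)))
      ((fpow T k).map (π0.app M ≫ p.app M))
      ((fpow T k).map (T.map (p.app M)))
      ((fpow T k).map (zero.app M))

namespace TangentStructure

/-- The data of a differential bundle over `M` with total space `E`. -/
structure DiffBundleData (TS : TangentStructure C) (E M : C) where
  q : E ⟶ M
  E2 : C
  p0 : E2 ⟶ E
  p1 : E2 ⟶ E
  σ : E2 ⟶ E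
  ζ : M ⟶ E
  lam : E ⟶ TS.T.obj E

variable (TS : TangentStructure C)

/-- The axioms making `D` a differential bundle (without the universality of the lift). -/
structure IsPreDiffBundle {E M : C} (D : TS.DiffBundleData E M) : Prop where
  isPB0 : IsPullback D.p0 D.p1 D.q D.q
  isPB1 : IsPullback (TS.T.map D.p0) (TS.T.map D.p1) (TS.T.map D.q) (TS.T.map D.q)
  isPBk : ∀ k : ℕ, IsPullback ((fpow TS.T k).map D.p0) ((fpow TS.T k).map D.p1)
      ((fpow TS.T k).map D.q) ((fpow TS.T k).map D.q)
  hasWide : ∀ n : ℕ,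
    HasLimit (WidePullbackShape.wideCospan M (fun _ : Fin n => E) (fun _ => D.q))
  presWide : ∀ n k : ℕ,
    PreservesLimit (WidePullbackShape.wideCospan M (fun _ : Fin n => E) (fun _ => D.q))
      (fpow TS.T k)
  σ_q : D.σ ≫ D.q = D.p0 ≫ D.q
  ζ_q : D.ζ ≫ D.q = 𝟙 M
  σ_comm : ∀ {X : C} (f g : X ⟶ E) (h : f ≫ D.q = g ≫ D.q),
    isPB0.lift f g h ≫ D.σ = isPB0.lift g f h.symm ≫ D.σ
  σ_zero : ∀ {X : C} (f : X ⟶ E) (h : (f ≫ D.q ≫ D.ζ) ≫ D.q = f ≫ D.q),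
    isPB0.lift (f ≫ D.q ≫ D.ζ) f h ≫ D.σ = f
  σ_assoc : ∀ {X : C} (f g h : X ⟶ E)
    (hfg : f ≫ D.q = g ≫ D.q) (hgh : g ≫ D.q = h ≫ D.q)
    (h1 : (isPB0.lift f g hfg ≫ D.σ) ≫ D.q = h ≫ D.q)
    (h2 : f ≫ D.q = (isPB0.lift g h hgh ≫ D.σ) ≫ D.q),
    isPB0.lift (isPB0.lift f g hfg ≫ D.σ) h h1 ≫ D.σ =
      isPB0.lift f (isPB0.lift g h hgh ≫ D.σ) h2 ≫ D.σ
  lam_Tq : D.lam ≫ TS.T.map D.q = D.q ≫ TS.zero.app M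
  lam_zero0 : D.ζ ≫ D.lam = TS.zero.app M ≫ TS.T.map D.ζ
  lam_add0 : ∀ {X : C} (f g : X ⟶ E) (h : f ≫ D.q = g ≫ D.q)
    (h' : (f ≫ D.lam) ≫ TS.T.map D.q = (g ≫ D.lam) ≫ TS.T.map D.q),
    isPB0.lift f g h ≫ D.σ ≫ D.lam =
      isPB1.lift (f ≫ D.lam) (g ≫ D.lam) h' ≫ TS.T.map D.σ
  lam_p : D.lam ≫ TS.p.app E = D.q ≫ D.ζ
  lam_zero1 : D.ζ ≫ D.lam = D.ζ ≫ TS.zero.app E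
  lam_add1 : ∀ {X : C} (f g : X ⟶ E) (h : f ≫ D.q = g ≫ D.q)
    (h' : (f ≫ D.lam) ≫ TS.p.app E = (g ≫ D.lam) ≫ TS.p.app E),
    isPB0.lift f g h ≫ D.σ ≫ D.lam =
      (TS.isPB0 E).lift (f ≫ D.lam) (g ≫ D.lam) h' ≫ TS.add.app E
  lam_l : D.lam ≫ TS.l.app E = D.lam ≫ TS.T.map D.lam

/-- The full axioms for a differential bundle, including the universality of the lift. -/
structure IsDiffBundle {E M : C} (D : TS.DiffBundleData E M)
    extends TS.IsPreDiffBundle D : Prop where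
  univ : ∀ (k : ℕ)
    (h : (D.p0 ≫ D.lam) ≫ TS.T.map D.q = (D.p1 ≫ TS.zero.app E) ≫ TS.T.map D.q),
    IsPullback
      ((fpow TS.T k).map (toIsPreDiffBundle.isPB1.lift (D.p0 ≫ D.lam)
        (D.p1 ≫ TS.zero.app E) h ≫ TS.T.map D.σ))
      ((fpow TS.T k).map (D.p0 ≫ D.q))
      ((fpow TS.T k).map (TS.T.map D.q))
      ((fpow TS.T k).map (TS.zero.app M))

variable {TS}

lemma mu_w {E M : C} {D : TS.DiffBundleData E M} (hD : TS.IsPreDiffBundle D) :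
    (D.p0 ≫ D.lam) ≫ TS.T.map D.q = (D.p1 ≫ TS.zero.app E) ≫ TS.T.map D.q := by
  have hz : TS.zero.app E ≫ TS.T.map D.q = D.q ≫ TS.zero.app M := by
    simpa using (TS.zero.naturality D.q).symm
  rw [Category.assoc, hD.lam_Tq, Category.assoc, hz, ← Category.assoc, ← Category.assoc,
    hD.isPB0.w]

/-- The map `μ = ⟨π₀λ, π₁0⟩T(σ) : E₂ ⟶ TE` of a differential bundle. -/
noncomputable def DiffBundleData.mu {E M : C} (D : TS.DiffBundleData E M)
    (hD : TS.IsPreDiffBundle D) : D.E2 ⟶ TS.T.obj E :=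
  hD.isPB1.lift (D.p0 ≫ D.lam) (D.p1 ≫ TS.zero.app E) (mu_w hD) ≫ TS.T.map D.σ

/-- `IsBracket f b` says that `b` satisfies the defining property of the bracket `{f}`:
`f = ⟨bλ, fp0⟩T(σ)`. -/
def IsBracket {E M : C} (D : TS.DiffBundleData E M)
    (h1 : IsPullback (TS.T.map D.p0) (TS.T.map D.p1) (TS.T.map D.q) (TS.T.map D.q))
    {X : C} (f : X ⟶ TS.T.obj E) (b : X ⟶ E) : Prop :=
  ∃ w, f = h1.lift (b ≫ D.lam) (f ≫ TS.p.app E ≫ TS.zero.app E) w ≫ TS.T.map D.σ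

/-- `(f, g)` is a morphism of differential bundles. -/
def IsBundleHom {E M E' M' : C} (D : TS.DiffBundleData E M) (D' : TS.DiffBundleData E' M')
    (f : E ⟶ E') (g : M ⟶ M') : Prop :=
  f ≫ D'.q = D.q ≫ g

/-- `(f, g)` is a linear morphism of differential bundles. -/
def IsLinearBundleHom {E M E' M' : C} (D : TS.DiffBundleData E M) (D' : TS.DiffBundleData E' M')
    (f : E ⟶ E') (g : M ⟶ M') : Prop :=
  f ≫ D'.q = D.q ≫ g ∧ f ≫ D'.lam = D.lam ≫ TS.T.map f

/-- Applying the tangent functor to a differential bundle. -/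
def DiffBundleData.tangent {E M : C} (D : TS.DiffBundleData E M) :
    TS.DiffBundleData (TS.T.obj E) (TS.T.obj M) where
  q := TS.T.map D.q
  E2 := TS.T.obj D.E2
  p0 := TS.T.map D.p0
  p1 := TS.T.map D.p1
  σ := TS.T.map D.σ
  ζ := TS.T.map D.ζ
  lam := TS.T.map D.lam ≫ TS.c.app E

end TangentStructure

namespace TangentStructure

variable {TS : TangentStructure C}

lemma zero_nat' {X Y : C} (f : X ⟶ Y) :
    f ≫ TS.zero.app Y = TS.zero.app X ≫ TS.T.map f := by
  simpa using TS.zero.naturality f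

section Helpers

variable {E M : C} {D : TS.DiffBundleData E M}

lemma id_lift_w (hD : TS.IsPreDiffBundle D) : 𝟙 E ≫ D.q = (D.q ≫ D.ζ) ≫ D.q := by
  simp [hD.ζ_q]

lemma lift_id_zeta_σ (hD : TS.IsPreDiffBundle D) :
    hD.isPB0.lift (𝟙 E) (D.q ≫ D.ζ) (id_lift_w hD) ≫ D.σ = 𝟙 E := by
  rw [hD.σ_comm]
  have h1 := hD.σ_zero (𝟙 E) (by simp [hD.ζ_q])
  have h2 : hD.isPB0.lift (D.q ≫ D.ζ) (𝟙 E) (id_lift_w hD).symm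
      = hD.isPB0.lift (𝟙 E ≫ D.q ≫ D.ζ) (𝟙 E) (by simp [hD.ζ_q]) := by
    apply hD.isPB0.hom_ext <;> simp
  rw [h2]
  exact h1

/-- The vertical lift factors through `μ`. -/
lemma lam_factor (hD : TS.IsPreDiffBundle D) :
    hD.isPB0.lift (𝟙 E) (D.q ≫ D.ζ) (id_lift_w hD) ≫ D.mu hD = D.lam := by
  have key : hD.isPB0.lift (𝟙 E) (D.q ≫ D.ζ) (id_lift_w hD) ≫
      hD.isPB1.lift (D.p0 ≫ D.lam) (D.p1 ≫ TS.zero.app E) (mu_w hD)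
      = D.lam ≫ TS.T.map (hD.isPB0.lift (𝟙 E) (D.q ≫ D.ζ) (id_lift_w hD)) := by
    apply hD.isPB1.hom_ext
    · rw [Category.assoc, Category.assoc, hD.isPB1.lift_fst, ← TS.T.map_comp,
        hD.isPB0.lift_fst, ← Category.assoc, hD.isPB0.lift_fst]
      simp
    · rw [Category.assoc, Category.assoc, hD.isPB1.lift_snd, ← TS.T.map_comp,
        hD.isPB0.lift_snd, ← Category.assoc, hD.isPB0.lift_snd]
      rw [Category.assoc, zero_nat' D.ζ, TS.T.map_comp, ← Category.assoc, ← hD.lam_Tq,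
        Category.assoc]
  unfold DiffBundleData.mu
  rw [← Category.assoc, key, Category.assoc, ← TS.T.map_comp, lift_id_zeta_σ hD]
  simp

lemma univ0 (hD : TS.IsDiffBundle D) :
    IsPullback (D.mu hD.toIsPreDiffBundle) (D.p0 ≫ D.q) (TS.T.map D.q) (TS.zero.app M) :=
  hD.univ 0 (mu_w hD.toIsPreDiffBundle)

/-- Any map into `E` is determined by its composite with the vertical lift. -/
lemma lam_cancel (hD : TS.IsDiffBundle D) {X : C} {a b : X ⟶ E}
    (h : a ≫ D.lam = b ≫ D.lam) : a = b := by
  have hq : a ≫ D.q = b ≫ D.q := by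
    have h1 : a ≫ D.q ≫ D.ζ = b ≫ D.q ≫ D.ζ := by
      rw [← hD.lam_p, ← Category.assoc, ← Category.assoc, h]
    have h2 := congrArg (· ≫ D.q) h1
    simpa [hD.ζ_q] using h2
  have key : ∀ (x : X ⟶ E) (wx : x ≫ D.q = (x ≫ D.q ≫ D.ζ) ≫ D.q),
      x ≫ D.lam = hD.isPB0.lift x (x ≫ D.q ≫ D.ζ) wx ≫ D.mu hD.toIsPreDiffBundle := by
    intro x wx
    rw [← lam_factor hD.toIsPreDiffBundle, ← Category.assoc]
    congr 1
    apply hD.isPB0.hom_ext <;> simp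
  have wa : a ≫ D.q = (a ≫ D.q ≫ D.ζ) ≫ D.q := by simp [hD.ζ_q]
  have wb : b ≫ D.q = (b ≫ D.q ≫ D.ζ) ≫ D.q := by simp [hD.ζ_q]
  have hAB : hD.isPB0.lift a (a ≫ D.q ≫ D.ζ) wa = hD.isPB0.lift b (b ≫ D.q ≫ D.ζ) wb := by
    apply (univ0 hD).hom_ext
    · rw [← key a wa, ← key b wb, h]
    · rw [← Category.assoc, hD.isPB0.lift_fst, ← Category.assoc, hD.isPB0.lift_fst, hq]
  have := congrArg (· ≫ D.p0) hAB
  simpa using this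

end Helpers

lemma add_lift_nat {X E E' : C} (f : E ⟶ E') (a b : X ⟶ TS.T.obj E)
    (w : a ≫ TS.p.app E = b ≫ TS.p.app E)
    (w' : (a ≫ TS.T.map f) ≫ TS.p.app E' = (b ≫ TS.T.map f) ≫ TS.p.app E') :
    (TS.isPB0 E).lift a b w ≫ TS.add.app E ≫ TS.T.map f =
      (TS.isPB0 E').lift (a ≫ TS.T.map f) (b ≫ TS.T.map f) w' ≫ TS.add.app E' := by
  have h2 : (TS.isPB0 E).lift a b w ≫ TS.T2.map f
      = (TS.isPB0 E').lift (a ≫ TS.T.map f) (b ≫ TS.T.map f) w' := by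
    apply (TS.isPB0 E').hom_ext
    · rw [Category.assoc, TS.π0.naturality f, ← Category.assoc, (TS.isPB0 E).lift_fst,
        (TS.isPB0 E').lift_fst]
    · rw [Category.assoc, TS.π1.naturality f, ← Category.assoc, (TS.isPB0 E).lift_snd,
        (TS.isPB0 E').lift_snd]
  rw [← TS.add.naturality f, ← Category.assoc, h2]

/-- A linear bundle morphism is additive. -/
lemma linear_additive {E M E' M' : C} {D : TS.DiffBundleData E M} {D' : TS.DiffBundleData E' M'}
    (hD : TS.IsDiffBundle D) (hD' : TS.IsDiffBundle D') {f : E ⟶ E'} {g : M ⟶ M'}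
    (hm : f ≫ D'.q = D.q ≫ g) (hf : f ≫ D'.lam = D.lam ≫ TS.T.map f)
    (w : (D.p0 ≫ f) ≫ D'.q = (D.p1 ≫ f) ≫ D'.q) :
    D.σ ≫ f = hD'.isPB0.lift (D.p0 ≫ f) (D.p1 ≫ f) w ≫ D'.σ := by
  have wpl : (D.p0 ≫ D.lam) ≫ TS.p.app E = (D.p1 ≫ D.lam) ≫ TS.p.app E := by
    simp only [Category.assoc, hD.lam_p]
    simp only [← Category.assoc]
    rw [hD.isPB0.w]
  have hid : hD.isPB0.lift D.p0 D.p1 hD.isPB0.w = 𝟙 D.E2 := by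
    apply hD.isPB0.hom_ext <;> simp
  have hsl : D.σ ≫ D.lam
      = (TS.isPB0 E).lift (D.p0 ≫ D.lam) (D.p1 ≫ D.lam) wpl ≫ TS.add.app E := by
    have h := hD.lam_add1 D.p0 D.p1 hD.isPB0.w wpl
    rwa [hid, Category.id_comp] at h
  have wtf : ((D.p0 ≫ D.lam) ≫ TS.T.map f) ≫ TS.p.app E'
      = ((D.p1 ≫ D.lam) ≫ TS.T.map f) ≫ TS.p.app E' := by
    have hp : TS.T.map f ≫ TS.p.app E' = TS.p.app E ≫ f := by simpa using TS.p.naturality f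
    simp only [Category.assoc, hp]
    simp only [← Category.assoc]
    rw [wpl]
  have w3 : ((D.p0 ≫ f) ≫ D'.lam) ≫ TS.p.app E'
      = ((D.p1 ≫ f) ≫ D'.lam) ≫ TS.p.app E' := by
    simp only [Category.assoc, hD'.lam_p]
    simp only [← Category.assoc]
    rw [w]
  apply lam_cancel hD'
  calc (D.σ ≫ f) ≫ D'.lam
      = D.σ ≫ D.lam ≫ TS.T.map f := by rw [Category.assoc, hf]
    _ = (TS.isPB0 E).lift (D.p0 ≫ D.lam) (D.p1 ≫ D.lam) wpl ≫ TS.add.app E ≫ TS.T.map f := by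
        rw [← Category.assoc, hsl, Category.assoc]
    _ = (TS.isPB0 E').lift ((D.p0 ≫ D.lam) ≫ TS.T.map f) ((D.p1 ≫ D.lam) ≫ TS.T.map f) wtf ≫
          TS.add.app E' := add_lift_nat f _ _ wpl wtf
    _ = (TS.isPB0 E').lift ((D.p0 ≫ f) ≫ D'.lam) ((D.p1 ≫ f) ≫ D'.lam) w3 ≫
          TS.add.app E' := by
        congr 1
        apply (TS.isPB0 E').hom_ext <;> simp [hf]
    _ = (hD'.isPB0.lift (D.p0 ≫ f) (D.p1 ≫ f) w ≫ D'.σ) ≫ D'.lam := by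
        rw [Category.assoc _ D'.σ D'.lam]
        exact (hD'.lam_add1 (D.p0 ≫ f) (D.p1 ≫ f) w w3).symm

end TangentStructure

open TangentStructure in
/-- a linear bundle morphism satisfies `μT(f) = ⟨π₀f, π₁f⟩μ'`; conversely,
a bundle morphism satisfying this identity and preserving the zero is linear. -/
theorem linear_iff_mu_compat (TS : TangentStructure C) {E M E' M' : C}
    (D : TS.DiffBundleData E M) (D' : TS.DiffBundleData E' M')
    (hD : TS.IsDiffBundle D) (hD' : TS.IsDiffBundle D')
    (f : E ⟶ E') (g : M ⟶ M') (hm : f ≫ D'.q = D.q ≫ g) :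
    ((f ≫ D'.lam = D.lam ≫ TS.T.map f) →
      ∀ (w : (D.p0 ≫ f) ≫ D'.q = (D.p1 ≫ f) ≫ D'.q),
        D.mu hD.toIsPreDiffBundle ≫ TS.T.map f =
          hD'.isPB0.lift (D.p0 ≫ f) (D.p1 ≫ f) w ≫ D'.mu hD'.toIsPreDiffBundle) ∧
    ((∀ (w : (D.p0 ≫ f) ≫ D'.q = (D.p1 ≫ f) ≫ D'.q),
        D.mu hD.toIsPreDiffBundle ≫ TS.T.map f =
          hD'.isPB0.lift (D.p0 ≫ f) (D.p1 ≫ f) w ≫ D'.mu hD'.toIsPreDiffBundle) →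
      D.ζ ≫ f = g ≫ D'.ζ →
      f ≫ D'.lam = D.lam ≫ TS.T.map f) := by
  constructor
  · -- linear ⟹ μ-compatibility
    intro hf w
    have hadd := linear_additive hD hD' hm hf w
    unfold DiffBundleData.mu
    have key : hD.isPB1.lift (D.p0 ≫ D.lam) (D.p1 ≫ TS.zero.app E)
          (mu_w hD.toIsPreDiffBundle) ≫ TS.T.map (hD'.isPB0.lift (D.p0 ≫ f) (D.p1 ≫ f) w)
        = hD'.isPB0.lift (D.p0 ≫ f) (D.p1 ≫ f) w ≫
          hD'.isPB1.lift (D'.p0 ≫ D'.lam) (D'.p1 ≫ TS.zero.app E')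
            (mu_w hD'.toIsPreDiffBundle) := by
      apply hD'.isPB1.hom_ext
      · rw [Category.assoc, ← TS.T.map_comp, hD'.isPB0.lift_fst, Category.assoc,
          hD'.isPB1.lift_fst, ← Category.assoc, hD'.isPB0.lift_fst, TS.T.map_comp,
          ← Category.assoc, hD.isPB1.lift_fst]
        rw [Category.assoc, Category.assoc, ← hf]
      · rw [Category.assoc, ← TS.T.map_comp, hD'.isPB0.lift_snd, Category.assoc,
          hD'.isPB1.lift_snd, ← Category.assoc, hD'.isPB0.lift_snd, TS.T.map_comp,
          ← Category.assoc, hD.isPB1.lift_snd]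
        rw [Category.assoc, Category.assoc, ← zero_nat' f]
    calc (hD.isPB1.lift (D.p0 ≫ D.lam) (D.p1 ≫ TS.zero.app E)
            (mu_w hD.toIsPreDiffBundle) ≫ TS.T.map D.σ) ≫ TS.T.map f
        = hD.isPB1.lift (D.p0 ≫ D.lam) (D.p1 ≫ TS.zero.app E)
            (mu_w hD.toIsPreDiffBundle) ≫ TS.T.map (D.σ ≫ f) := by
          rw [Category.assoc, ← TS.T.map_comp]
      _ = hD.isPB1.lift (D.p0 ≫ D.lam) (D.p1 ≫ TS.zero.app E)
            (mu_w hD.toIsPreDiffBundle) ≫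
            TS.T.map (hD'.isPB0.lift (D.p0 ≫ f) (D.p1 ≫ f) w) ≫ TS.T.map D'.σ := by
          rw [hadd, TS.T.map_comp]
      _ = hD'.isPB0.lift (D.p0 ≫ f) (D.p1 ≫ f) w ≫
            hD'.isPB1.lift (D'.p0 ≫ D'.lam) (D'.p1 ≫ TS.zero.app E')
              (mu_w hD'.toIsPreDiffBundle) ≫ TS.T.map D'.σ := by
          rw [← Category.assoc, key, Category.assoc]
  · -- μ-compatibility + zero preservation ⟹ linear
    intro hmu hz
    have w : (D.p0 ≫ f) ≫ D'.q = (D.p1 ≫ f) ≫ D'.q := by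
      simp only [Category.assoc, hm]
      simp only [← Category.assoc]
      rw [hD.isPB0.w]
    have h := hmu w
    rw [← lam_factor hD.toIsPreDiffBundle, ← lam_factor hD'.toIsPreDiffBundle]
    have key : hD.toIsPreDiffBundle.isPB0.lift (𝟙 E) (D.q ≫ D.ζ)
          (id_lift_w hD.toIsPreDiffBundle) ≫ hD'.isPB0.lift (D.p0 ≫ f) (D.p1 ≫ f) w
        = f ≫ hD'.toIsPreDiffBundle.isPB0.lift (𝟙 E') (D'.q ≫ D'.ζ)
            (id_lift_w hD'.toIsPreDiffBundle) := by
      apply hD'.isPB0.hom_ext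
      · rw [Category.assoc, hD'.isPB0.lift_fst, ← Category.assoc, hD.isPB0.lift_fst,
          Category.assoc, hD'.isPB0.lift_fst]
        simp
      · rw [Category.assoc, hD'.isPB0.lift_snd, ← Category.assoc, hD.isPB0.lift_snd,
          Category.assoc, Category.assoc, hD'.isPB0.lift_snd]
        simp only [← Category.assoc]
        rw [hm]
        simp only [Category.assoc]
        rw [hz]
    rw [Category.assoc, h, ← Category.assoc, ← Category.assoc, key]
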